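/- Let n ≥ 2, A ∈ ℝ₊^{n×n} with positive diagonal, p ∈ ℝ₊ⁿ, γ ∈ ℝ, and suppose A or the matrix [[A, p],[𝟙ᵀ, 1]] is irreducible. Let μ be the smallest nonzero entry among the entries of A and p, and c = 1/(n−1). Then for g(x) = ∏ᵢ e^{−xᵢ}(pᵢ + Σⱼ A_{i,j} e^{xⱼ}) and every x with Σᵢ xᵢ = γ one has g(x) ≥ μⁿ · e^{−|γ| c} · e^{c ‖x‖_∞}. -/

import Mathlib

noncomputable def g {n : ℕ} (A : Matrix (Fin n) (Fin n) ℝ) (p : Fin n → ℝ)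
    (x : Fin n → ℝ) : ℝ :=
  ∏ i, Real.exp (-(x i)) * (p i + ∑ j, A i j * Real.exp (x j))

def Irred {m : ℕ} (M : Matrix (Fin m) (Fin m) ℝ) : Prop :=
  ∀ r s : Fin m, r ≠ s → ∃ (k : ℕ) (i : Fin (k+1) → Fin m),
    Function.Injective i ∧ i 0 = r ∧ i (Fin.last k) = s ∧
    ∀ j : Fin k, 0 < M (i j.castSucc) (i j.succ)

/-- The augmented matrix [[A, p],[𝟙ᵀ, 1]]. -/
def aug {n : ℕ} (A : Matrix (Fin n) (Fin n) ℝ) (p : Fin n → ℝ) :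
    Matrix (Fin (n+1)) (Fin (n+1)) ℝ := fun i j =>
  if hi : (i : ℕ) < n then
    (if hj : (j : ℕ) < n then A ⟨i, hi⟩ ⟨j, hj⟩ else p ⟨i, hi⟩)
  else 1

/-!
With `x̂ = (x, 0)` indexed by the vertices of `aug A p`, the `i`-th factor of `g` is
`∑ᵥ aug(i, v) e^{x̂ᵥ - xᵢ}`. It is at least `μ` (diagonal term) and at least `μ e^{x̂ᵥ - xᵢ}` for
every edge `i → v`. Along a simple path the rows are distinct and the exponents telescope, so
`g x ≥ μⁿ e^{x̂ₛ - x̂ᵣ}` whenever there is a path from `r` to `s`: between any two vertices of `A`,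
or from any `r` to the extra vertex of `aug A p`. It remains to find such endpoints with
`x̂ₛ - x̂ᵣ ≥ (‖x‖ - |γ|)/(n - 1)`. If `‖x‖ = x_k ≥ 0`, the smallest other coordinate is at most
`(γ - x_k)/(n - 1)`; if `‖x‖ = -x_k`, take `r = k`. Applying this to `x` and `-x` gives the two
endpoints needed for `A`.
-/

open Finset Real

theorem Fin.sum_succ_sub_castSucc {M : Type*} [AddCommGroup M] {k : ℕ} (V : Fin (k + 1) → M) :
    ∑ t : Fin k, (V t.succ - V t.castSucc) = V (Fin.last k) - V 0 := by
  have h₁ := Fin.sum_univ_succ V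
  rw [Fin.sum_univ_castSucc] at h₁
  rw [Finset.sum_sub_distrib, sub_eq_sub_iff_add_eq_add, add_comm, ← h₁, add_comm]

theorem pow_card_mul_exp_sum_le_prod {ι κ : Type*} [Fintype ι] [Fintype κ] {f : ι → ℝ} {μ : ℝ}
    (hμ : 0 < μ) (hf : ∀ j, μ ≤ f j) {e : κ → ι} (he : Function.Injective e) {w : κ → ℝ}
    (hw : ∀ t, μ * exp (w t) ≤ f (e t)) :
    μ ^ Fintype.card ι * exp (∑ t, w t) ≤ ∏ j, f j := by
  classical
  have hrel : ∀ j, 1 ≤ f j / μ := fun j => (one_le_div hμ).2 (hf j)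
  calc μ ^ Fintype.card ι * exp (∑ t, w t)
      = μ ^ Fintype.card ι * ∏ t, exp (w t) := by rw [exp_sum]
    _ ≤ μ ^ Fintype.card ι * ∏ t, f (e t) / μ := by
        gcongr with t
        exact (le_div_iff₀' hμ).2 (hw t)
    _ = μ ^ Fintype.card ι * ∏ j ∈ univ.image e, f j / μ := by
        rw [prod_image fun a _ b _ h => he h]
    _ ≤ μ ^ Fintype.card ι * ∏ j, f j / μ := by
        gcongr _ * ?_
        exact prod_le_prod_of_subset_of_one_le (subset_univ _)
          (fun j _ => zero_le_one.trans (hrel j)) fun j _ _ => hrel j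
    _ = ∏ j, f j := by
        rw [← card_univ, ← prod_const, ← prod_mul_distrib]
        exact prod_congr rfl fun j _ => mul_div_cancel₀ _ hμ.ne'

theorem mul_exp_le_sum_mul_exp {ι : Type*} [Fintype ι] {a : ι → ℝ} {μ : ℝ} (ha : ∀ u, 0 ≤ a u)
    {v : ι} (hv : μ ≤ a v) (z : ι → ℝ) : μ * exp (z v) ≤ ∑ u, a u * exp (z u) :=
  (mul_le_mul_of_nonneg_right hv (exp_pos _).le).trans <|
    single_le_sum (f := fun u => a u * exp (z u))
      (fun u _ => mul_nonneg (ha u) (exp_pos _).le) (mem_univ v)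

section Augmented

variable {n : ℕ} {A : Matrix (Fin n) (Fin n) ℝ} {p : Fin n → ℝ}

@[simp]
theorem aug_castSucc_castSucc (i j : Fin n) : aug A p i.castSucc j.castSucc = A i j := by
  simp [aug]

@[simp]
theorem aug_castSucc_last (i : Fin n) : aug A p i.castSucc (Fin.last n) = p i := by
  simp [aug]

theorem g_eq_prod_sum_aug (x : Fin n → ℝ) :
    g A p x = ∏ i, ∑ v, aug A p i.castSucc v * exp (Fin.snoc (α := fun _ => ℝ) x 0 v - x i) := by
  refine prod_congr rfl fun i _ => ?_
  simp only [Fin.sum_univ_castSucc, aug_castSucc_castSucc, aug_castSucc_last, Fin.snoc_castSucc,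
    Fin.snoc_last, sub_eq_add_neg, exp_add, exp_zero]
  rw [mul_add, mul_sum, add_comm]
  congr 1
  · exact sum_congr rfl fun j _ => by ring
  · ring

theorem pow_mul_exp_le_g_of_path {μ : ℝ} (hμ : 0 < μ)
    (hnonneg : ∀ (i : Fin n) v, 0 ≤ aug A p i.castSucc v)
    (hmin : ∀ (i : Fin n) v, 0 < aug A p i.castSucc v → μ ≤ aug A p i.castSucc v)
    (hdiag : ∀ i, 0 < A i i) (x : Fin n → ℝ) {k : ℕ} {q : Fin (k + 1) → Fin (n + 1)}
    (hq : Function.Injective q) (hrows : ∀ t : Fin k, q t.castSucc ≠ Fin.last n)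
    (hedge : ∀ t : Fin k, 0 < aug A p (q t.castSucc) (q t.succ)) :
    μ ^ n * exp (Fin.snoc (α := fun _ => ℝ) x 0 (q (Fin.last k)) -
      Fin.snoc (α := fun _ => ℝ) x 0 (q 0)) ≤ g A p x := by
  set y : Fin (n + 1) → ℝ := Fin.snoc (α := fun _ => ℝ) x 0
  have hrow : ∀ i v, 0 < aug A p i.castSucc v →
      μ * exp (y v - x i) ≤ ∑ u, aug A p i.castSucc u * exp (y u - x i) := fun i v h =>
    mul_exp_le_sum_mul_exp (hnonneg i) (hmin i v h) fun u => y u - x i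
  have hbound := pow_card_mul_exp_sum_le_prod hμ
    (fun i => by simpa [y] using hrow i i.castSucc (by simpa using hdiag i))
    (e := fun t => (q t.castSucc).castPred (hrows t))
    (fun a b h => Fin.castSucc_injective _ (hq (by simpa using h)))
    (w := fun t => y (q t.succ) - y (q t.castSucc))
    (fun t => by
      have hx : y (q t.castSucc) = x ((q t.castSucc).castPred (hrows t)) := by
        conv_lhs => rw [← Fin.castSucc_castPred _ (hrows t)]
        exact Fin.snoc_castSucc ..
      rw [hx]
      exact hrow _ _ (by rw [Fin.castSucc_castPred]; exact hedge t))
  rwa [Fintype.card_fin, Fin.sum_succ_sub_castSucc (fun t => y (q t)), ← g_eq_prod_sum_aug]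
    at hbound

end Augmented

section Irreducible

variable {n : ℕ} {A : Matrix (Fin n) (Fin n) ℝ} {p : Fin n → ℝ} {μ : ℝ}

theorem pow_mul_exp_sub_le_g_of_irred (hμ : 0 < μ)
    (hnonneg : ∀ (i : Fin n) v, 0 ≤ aug A p i.castSucc v)
    (hmin : ∀ (i : Fin n) v, 0 < aug A p i.castSucc v → μ ≤ aug A p i.castSucc v)
    (hdiag : ∀ i, 0 < A i i) (hirr : Irred A) (x : Fin n → ℝ) {r s : Fin n} (hrs : r ≠ s) :
    μ ^ n * exp (x s - x r) ≤ g A p x := by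
  obtain ⟨k, q, hq, hq0, hqk, hedge⟩ := hirr r s hrs
  simpa [hq0, hqk] using pow_mul_exp_le_g_of_path hμ hnonneg hmin hdiag x
    (q := Fin.castSucc ∘ q) ((Fin.castSucc_injective n).comp hq)
    (fun t => Fin.castSucc_ne_last _) (fun t => by simpa using hedge t)

theorem pow_mul_exp_neg_le_g_of_irred_aug (hμ : 0 < μ)
    (hnonneg : ∀ (i : Fin n) v, 0 ≤ aug A p i.castSucc v)
    (hmin : ∀ (i : Fin n) v, 0 < aug A p i.castSucc v → μ ≤ aug A p i.castSucc v)
    (hdiag : ∀ i, 0 < A i i) (hirr : Irred (aug A p)) (x : Fin n → ℝ) (r : Fin n) :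
    μ ^ n * exp (-x r) ≤ g A p x := by
  obtain ⟨k, q, hq, hq0, hqk, hedge⟩ := hirr r.castSucc (Fin.last n) (Fin.castSucc_ne_last r)
  have hrows : ∀ t : Fin k, q t.castSucc ≠ Fin.last n := fun t h =>
    (Fin.castSucc_lt_last t).ne (hq (h.trans hqk.symm))
  simpa [hq0, hqk] using pow_mul_exp_le_g_of_path hμ hnonneg hmin hdiag x hq hrows hedge

end Irreducible

section SumConstraint

variable {ι : Type*} [Fintype ι] [Nontrivial ι]

theorem exists_ne_mul_le_sum_sub (x : ι → ℝ) (k : ι) :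
    ∃ m, m ≠ k ∧ ((Fintype.card ι : ℝ) - 1) * x m ≤ ∑ i, x i - x k := by
  classical
  obtain ⟨m, hm, hmin⟩ := (univ.erase k).exists_min_image x
    ((univ.erase k).card_pos.1 (by simp [Fintype.one_lt_card]))
  refine ⟨m, ne_of_mem_erase hm, ?_⟩
  have hcard : (((univ.erase k).card : ℕ) : ℝ) = (Fintype.card ι : ℝ) - 1 := by
    rw [card_erase_of_mem (mem_univ k), card_univ, Nat.cast_pred Fintype.card_pos]
  rw [← hcard, ← nsmul_eq_mul, ← sum_erase_eq_sub (mem_univ k)]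
  exact card_nsmul_le_sum _ _ _ hmin

theorem exists_inv_mul_norm_sub_abs_sum_le_neg (x : ι → ℝ) :
    ∃ r, ((Fintype.card ι : ℝ) - 1)⁻¹ * (‖x‖ - |∑ i, x i|) ≤ -x r := by
  obtain ⟨k, -, hk⟩ := univ.exists_mem_eq_sup univ_nonempty fun i => ‖x i‖₊
  have hxk : ‖x‖ = |x k| := by
    rw [← Real.norm_eq_abs, ← coe_nnnorm, Pi.nnnorm_def, hk, coe_nnnorm]
  have hN : (1 : ℝ) ≤ (Fintype.card ι : ℝ) - 1 := by
    have : (2 : ℝ) ≤ Fintype.card ι := by exact_mod_cast Fintype.one_lt_card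
    linarith
  have hγ := le_abs_self (∑ i, x i)
  rcases le_or_gt 0 (x k) with hk0 | hk0
  · obtain ⟨m, -, hm⟩ := exists_ne_mul_le_sum_sub x k
    refine ⟨m, (inv_mul_le_iff₀ (by linarith)).2 ?_⟩
    rw [hxk, abs_of_nonneg hk0]
    linarith
  · refine ⟨k, (inv_mul_le_iff₀ (by linarith)).2 ?_⟩
    rw [hxk, abs_of_neg hk0]
    nlinarith [abs_nonneg (∑ i, x i)]

theorem exists_ne_inv_mul_norm_sub_abs_sum_le_sub (x : ι → ℝ) :
    ∃ r s, r ≠ s ∧ ((Fintype.card ι : ℝ) - 1)⁻¹ * (‖x‖ - |∑ i, x i|) ≤ x s - x r := by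
  have hc : 0 < ((Fintype.card ι : ℝ) - 1)⁻¹ := by
    have : (1 : ℝ) < Fintype.card ι := by exact_mod_cast Fintype.one_lt_card
    exact inv_pos.2 (by linarith)
  by_cases hsmall : ‖x‖ ≤ |∑ i, x i|
  · have hneg := mul_nonpos_of_nonneg_of_nonpos hc.le (sub_nonpos.2 hsmall)
    obtain ⟨a, b, hab⟩ := exists_pair_ne ι
    rcases le_total (x a) (x b) with h | h
    · exact ⟨a, b, hab, by linarith⟩
    · exact ⟨b, a, hab.symm, by linarith⟩
  · have hpos := mul_pos hc (sub_pos.2 (not_le.1 hsmall))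
    obtain ⟨r, hr⟩ := exists_inv_mul_norm_sub_abs_sum_le_neg x
    obtain ⟨s, hs⟩ := exists_inv_mul_norm_sub_abs_sum_le_neg (-x)
    simp only [norm_neg, Pi.neg_apply, sum_neg_distrib, abs_neg, neg_neg] at hs
    refine ⟨r, s, ?_, by linarith⟩
    rintro rfl
    linarith

end SumConstraint

section EntryBounds

variable {n : ℕ} {A : Matrix (Fin n) (Fin n) ℝ} {p : Fin n → ℝ}

theorem aug_castSucc_nonneg (hA : ∀ i j, 0 ≤ A i j) (hp : ∀ i, 0 ≤ p i) (i : Fin n)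
    (v : Fin (n + 1)) : 0 ≤ aug A p i.castSucc v := by
  induction v using Fin.lastCases <;> simp [hA, hp]

theorem le_aug_castSucc_of_isLeast {μ : ℝ}
    (hμ : IsLeast {y : ℝ | ((∃ i j, A i j = y) ∨ (∃ i, p i = y)) ∧ y ≠ 0} μ) (i : Fin n)
    (v : Fin (n + 1)) (hv : 0 < aug A p i.castSucc v) : μ ≤ aug A p i.castSucc v := by
  refine hμ.2 ⟨?_, hv.ne'⟩
  induction v using Fin.lastCases with
  | last => exact Or.inr ⟨i, by simp⟩
  | cast j => exact Or.inl ⟨i, j, by simp⟩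

theorem pos_of_isLeast {μ : ℝ} (hA : ∀ i j, 0 ≤ A i j) (hp : ∀ i, 0 ≤ p i)
    (hμ : IsLeast {y : ℝ | ((∃ i j, A i j = y) ∨ (∃ i, p i = y)) ∧ y ≠ 0} μ) : 0 < μ := by
  obtain ⟨⟨⟨i, j, rfl⟩ | ⟨i, rfl⟩, hne⟩, -⟩ := hμ
  exacts [(hA i j).lt_of_ne' hne, (hp i).lt_of_ne' hne]

end EntryBounds

theorem stmt5 {n : ℕ} (hn : 2 ≤ n) (A : Matrix (Fin n) (Fin n) ℝ)
    (p : Fin n → ℝ) (γ μ : ℝ)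
    (hA : ∀ i j, 0 ≤ A i j) (hp : ∀ i, 0 ≤ p i)
    (hdiag : ∀ i, 0 < A i i)
    (hirr : Irred A ∨ Irred (aug A p))
    (hμ : IsLeast {y : ℝ | ((∃ i j, A i j = y) ∨ (∃ i, p i = y)) ∧ y ≠ 0} μ) :
    ∀ x : Fin n → ℝ, (∑ i, x i) = γ →
      μ ^ n * Real.exp (-(|γ| * ((n : ℝ) - 1)⁻¹)) * Real.exp (((n : ℝ) - 1)⁻¹ * ‖x‖) ≤
        g A p x := by
  intro x hx
  have : Nontrivial (Fin n) := Fin.nontrivial_iff_two_le.2 hn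
  have hμ0 := pos_of_isLeast hA hp hμ
  have hnonneg := aug_castSucc_nonneg hA hp
  have hmin := le_aug_castSucc_of_isLeast hμ
  obtain ⟨E, hE, hgE⟩ :
      ∃ E, ((n : ℝ) - 1)⁻¹ * (‖x‖ - |γ|) ≤ E ∧ μ ^ n * exp E ≤ g A p x := by
    rcases hirr with hirr | hirr
    · obtain ⟨r, s, hrs, h⟩ := exists_ne_inv_mul_norm_sub_abs_sum_le_sub x
      exact ⟨_, by simpa [hx] using h,
        pow_mul_exp_sub_le_g_of_irred hμ0 hnonneg hmin hdiag hirr x hrs⟩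
    · obtain ⟨r, h⟩ := exists_inv_mul_norm_sub_abs_sum_le_neg x
      exact ⟨_, by simpa [hx] using h,
        pow_mul_exp_neg_le_g_of_irred_aug hμ0 hnonneg hmin hdiag hirr x r⟩
  calc μ ^ n * exp (-(|γ| * ((n : ℝ) - 1)⁻¹)) * exp (((n : ℝ) - 1)⁻¹ * ‖x‖)
      = μ ^ n * exp (((n : ℝ) - 1)⁻¹ * (‖x‖ - |γ|)) := by
        rw [mul_assoc, ← exp_add]
        ring_nf
    _ ≤ μ ^ n * exp E := by gcongr
    _ ≤ g A p x := hgE
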